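/- arXiv:1706.07707 — 5 statements merged into one kernel-verified Lean document; each statement's English description precedes it below -/
import Mathlib

section
/- For every agent i ∈ {1,…,n} and every k ≥ 0, the D-DPS iterates satisfy ‖x_i^k − z̄^k‖ ≤ Γ Σ_{r=1}^{k−1} γ^{k−r} g_{r−1} + g_{k−1}, where sums over empty index ranges are zero and g_{−1} = 0. -/
/-!
Stack the iterates as `w k = (x k, y k)`. By the definition of `gv`, the D-DPS update is the
linear recurrence `w (k + 1) = M w k + (gv k, 0)` with the block matrix `M` of the hypothesis,
so `w k = ∑_{r<k} M ^ (k - 1 - r) (gv r, 0)`. The columns of `M` sum to one, so the uniform row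
vector `c = 𝟙 / n` is a left fixed vector of `M` and `z̄ k = c · w k = ∑_{r<k} c · (gv r, 0)`.
Hence `x k i - z̄ k = ∑_{r<k} ∑_l ((M ^ (k - 1 - r)) (i, l) - 1 / n) (gv r, 0) l`, and the
coefficients are at most `Γ γ ^ (k - 1 - r)` by hypothesis, except in the last term `r = k - 1`,
where `M ^ 0 = 1` and they are at most `1`.
-/

open Finset Matrix
open scoped RealInnerProductSpace

section LinearRecurrence

variable {κ R E : Type*} [Fintype κ] [CommRing R] [AddCommGroup E] [Module R E]

theorem sum_smul_sum_smul_eq_vecMul (c : κ → R) (M : Matrix κ κ R) (v : κ → E) :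
    ∑ l, c l • ∑ m, M l m • v m = ∑ m, (c ᵥ* M) m • v m := by
  simp only [smul_sum, smul_smul, vecMul, dotProduct, sum_smul]
  exact sum_comm

variable {M : Matrix κ κ R} {w u : ℕ → κ → E}

theorem sum_smul_eq_of_vecMul_eq {c : κ → R} (hc : c ᵥ* M = c) (hw0 : w 0 = 0)
    (hw : ∀ k j, w (k + 1) j = ∑ l, M j l • w k l + u k j) (k : ℕ) :
    ∑ l, c l • w k l = ∑ r ∈ range k, ∑ l, c l • u r l := by
  induction k with
  | zero => simp [hw0]
  | succ k ih =>
    simp only [hw, smul_add, sum_add_distrib, sum_smul_sum_smul_eq_vecMul, hc, ih,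
      sum_range_succ]

variable [DecidableEq κ]

theorem sum_one_apply_smul (v : κ → E) (j : κ) : ∑ l, (1 : Matrix κ κ R) j l • v l = v j := by
  simp [one_apply, ite_smul]

theorem eq_sum_pow_smul_of_recurrence (hw0 : w 0 = 0)
    (hw : ∀ k j, w (k + 1) j = ∑ l, M j l • w k l + u k j) (k : ℕ) (j : κ) :
    w k j = ∑ r ∈ range k, ∑ l, (M ^ (k - 1 - r)) j l • u r l := by
  induction k generalizing j with
  | zero => simp [hw0]
  | succ k ih =>
    rw [hw, sum_range_succ, Nat.add_sub_cancel, Nat.sub_self, pow_zero, sum_one_apply_smul]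
    congr 1
    simp only [ih, smul_sum]
    rw [sum_comm]
    refine sum_congr rfl fun r hr => ?_
    have hkr : k - r = k - 1 - r + 1 := by have := mem_range.mp hr; omega
    simp only [← smul_sum]
    rw [hkr, pow_succ']
    exact sum_smul_sum_smul_eq_vecMul (M j) _ _

theorem sub_sum_smul_eq_of_recurrence {c : κ → R} (hc : c ᵥ* M = c) (hw0 : w 0 = 0)
    (hw : ∀ k j, w (k + 1) j = ∑ l, M j l • w k l + u k j) (k : ℕ) (j : κ) :
    w k j - ∑ l, c l • w k l = ∑ r ∈ range k, ∑ l, ((M ^ (k - 1 - r)) j l - c l) • u r l := by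
  simp only [eq_sum_pow_smul_of_recurrence hw0 hw k j, sum_smul_eq_of_vecMul_eq hc hw0 hw k,
    sub_smul, sum_sub_distrib]

end LinearRecurrence

section NormBound

variable {κ 𝕜 E : Type*} [Fintype κ] [NormedField 𝕜] [SeminormedAddCommGroup E]
  [NormedSpace 𝕜 E]

theorem norm_sum_smul_le_mul_sum_norm {a : κ → 𝕜} {b : ℝ} (ha : ∀ l, ‖a l‖ ≤ b) (v : κ → E) :
    ‖∑ l, a l • v l‖ ≤ b * ∑ l, ‖v l‖ := by
  rw [mul_sum]
  refine (norm_sum_le _ _).trans (sum_le_sum fun l _ => ?_)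
  rw [norm_smul]
  exact mul_le_mul_of_nonneg_right (ha l) (norm_nonneg _)

variable [DecidableEq κ] {M : Matrix κ κ 𝕜} {w u : ℕ → κ → E} {c : κ → 𝕜}

theorem norm_sub_sum_smul_le_of_recurrence (hc : c ᵥ* M = c) (hw0 : w 0 = 0)
    (hw : ∀ k j, w (k + 1) j = ∑ l, M j l • w k l + u k j) {j : κ} {β : ℕ → ℝ}
    (hβ : ∀ m l, ‖(M ^ m) j l - c l‖ ≤ β m) (k : ℕ) :
    ‖w k j - ∑ l, c l • w k l‖ ≤ ∑ r ∈ range k, β (k - 1 - r) * ∑ l, ‖u r l‖ := by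
  rw [sub_sum_smul_eq_of_recurrence hc hw0 hw]
  exact (norm_sum_le _ _).trans
    (sum_le_sum fun r _ => norm_sum_smul_le_mul_sum_norm (hβ _) _)

end NormBound

theorem sum_fromBlocks_smul_sum_elim {l m n o R E : Type*} [Fintype l] [Fintype m]
    [Semiring R] [AddCommMonoid E] [Module R E] (A : Matrix n l R) (B : Matrix n m R)
    (C : Matrix o l R) (D : Matrix o m R) (v : l → E) (v' : m → E) (j : n ⊕ o) :
    ∑ i, fromBlocks A B C D j i • Sum.elim v v' i =
      Sum.elim (fun j => ∑ i, A j i • v i + ∑ i, B j i • v' i)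
        (fun j => ∑ i, C j i • v i + ∑ i, D j i • v' i) j := by
  cases j <;> simp [Fintype.sum_sum_type]

theorem sum_range_ite_mul_eq {S : Type*} [CommSemiring S] (a q : S) (h : ℕ → S) (k : ℕ) :
    ∑ r ∈ range k, (if k - 1 - r = 0 then 1 else a * q ^ (k - 1 - r)) * h r =
      a * ∑ r ∈ Icc 1 (k - 1), q ^ (k - r) * h (r - 1) + if k = 0 then 0 else h (k - 1) := by
  rcases k with _ | k
  · simp
  rw [sum_range_succ, ← Ico_add_one_right_eq_Icc, sum_Ico_eq_sum_range, mul_sum]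
  simp only [Nat.add_sub_cancel, Nat.sub_self, if_true, one_mul, Nat.succ_ne_zero, if_false]
  congr 1
  refine sum_congr (by simp) fun r hr => ?_
  have hr : r < k := mem_range.mp hr
  rw [if_neg (by omega), Nat.add_sub_cancel_left, mul_assoc]
  congr 3
  omega

section DDPS

variable {ι R E : Type*} [Fintype ι] [DecidableEq ι] [CommRing R] [AddCommGroup E] [Module R E]

theorem ddps_stacked_step (A Bh : Matrix ι ι R) (ε : R) {x y gv : ℕ → ι → E}
    (hyupd : ∀ k i, y (k + 1) i =
      x k i - ∑ j, A i j • x k j + (∑ j, Bh i j • y k j) - ε • y k i)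
    (hgv : ∀ k i, gv k i = x (k + 1) i - ∑ j, A i j • x k j - ε • y k i) (k : ℕ) (j : ι ⊕ ι) :
    Sum.elim (x (k + 1)) (y (k + 1)) j =
      ∑ l, fromBlocks A (ε • 1) (1 - A) (Bh - ε • 1) j l • Sum.elim (x k) (y k) l +
        Sum.elim (gv k) 0 j := by
  rw [sum_fromBlocks_smul_sum_elim]
  have hε : ∀ (v : ι → E) i, ∑ l, (ε • (1 : Matrix ι ι R)) i l • v l = ε • v i := by
    simp [mul_smul, ← smul_sum, sum_one_apply_smul]
  cases j with
  | inl i =>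
    simp only [Sum.elim_inl, hε, hgv]
    abel
  | inr i =>
    simp only [Sum.elim_inr, hε, Matrix.sub_apply, sub_smul, sum_sub_distrib, sum_one_apply_smul,
      hyupd, Pi.zero_apply, add_zero]
    abel

theorem one_vecMul_ddps_matrix (A : Matrix ι ι R) {Bh : Matrix ι ι R} (ε : R)
    (hBh : (1 : ι → R) ᵥ* Bh = 1) :
    (1 : ι ⊕ ι → R) ᵥ* fromBlocks A (ε • 1) (1 - A) (Bh - ε • 1) = 1 := by
  rw [vecMul_fromBlocks]
  simp [vecMul_sub, hBh]

end DDPS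

theorem abs_one_apply_sub_le {κ : Type*} [DecidableEq κ] {a : ℝ} (ha₀ : 0 ≤ a) (ha₁ : a ≤ 1)
    (i j : κ) : |(1 : Matrix κ κ ℝ) i j - a| ≤ 1 := by
  rw [abs_le]
  by_cases h : i = j
  · subst h; simp only [one_apply_eq]; constructor <;> linarith
  · simp only [one_apply_ne h]; constructor <;> linarith

theorem ddps_consensus_bound_general
    {n p : ℕ}
    (A Bh : Matrix (Fin n) (Fin n) ℝ)
    (hBcol : ∀ j, ∑ i, Bh i j = 1)
    (ε : ℝ)
    (x y : ℕ → Fin n → EuclideanSpace ℝ (Fin p))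
    (hx0 : ∀ i, x 0 i = 0) (hy0 : ∀ i, y 0 i = 0)
    (hyupd : ∀ k i, y (k + 1) i =
      x k i - ∑ j, A i j • x k j + (∑ j, Bh i j • y k j) - ε • y k i)
    (gv : ℕ → Fin n → EuclideanSpace ℝ (Fin p))
    (hgv : ∀ k i, gv k i = x (k + 1) i - ∑ j, A i j • x k j - ε • y k i)
    (g : ℕ → ℝ) (hg : ∀ k, g k = ∑ i, ‖gv k i‖)
    (zbar : ℕ → EuclideanSpace ℝ (Fin p))
    (hzbar : ∀ k, zbar k = (n : ℝ)⁻¹ • (∑ i, x k i + ∑ i, y k i))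
    (Γ γ : ℝ)
    (hM : ∀ (k : ℕ) (i : Fin n ⊕ Fin n),
      ∑ j, |((Matrix.fromBlocks A (ε • (1 : Matrix (Fin n) (Fin n) ℝ))
          ((1 : Matrix (Fin n) (Fin n) ℝ) - A) (Bh - ε • (1 : Matrix (Fin n) (Fin n) ℝ))) ^ k
        - Matrix.fromBlocks (Matrix.of fun _ _ => (n : ℝ)⁻¹)
            (Matrix.of fun _ _ => (n : ℝ)⁻¹) 0 0 :
          Matrix (Fin n ⊕ Fin n) (Fin n ⊕ Fin n) ℝ) i j| ≤ Γ * γ ^ k)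
    :
    ∀ (i : Fin n) (k : ℕ),
      ‖x k i - zbar k‖ ≤
        Γ * (∑ r ∈ Finset.Icc 1 (k - 1), γ ^ (k - r) * g (r - 1)) +
          (if k = 0 then 0 else g (k - 1)) := by
  intro i k
  set c : Fin n ⊕ Fin n → ℝ := (n : ℝ)⁻¹ • 1
  have hc : c ᵥ* fromBlocks A (ε • 1) (1 - A) (Bh - ε • 1) = c := by
    rw [smul_vecMul, one_vecMul_ddps_matrix A ε (by ext j; simp [vecMul, dotProduct, hBcol])]
  have hw0 : Sum.elim (x 0) (y 0) = 0 := by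
    ext1 j; cases j <;> simp [hx0, hy0]
  have hβ : ∀ m l, ‖(fromBlocks A (ε • 1) (1 - A) (Bh - ε • 1) ^ m) (Sum.inl i) l - c l‖ ≤
      if m = 0 then 1 else Γ * γ ^ m := by
    intro m l
    rw [Real.norm_eq_abs]
    split_ifs with hm
    · have hn : (1 : ℝ) ≤ n := Nat.one_le_cast.mpr i.pos
      rw [hm, pow_zero, show c l = (n : ℝ)⁻¹ by simp [c]]
      exact abs_one_apply_sub_le (by positivity) (inv_le_one_of_one_le₀ hn) _ _
    · refine le_trans ?_ ((single_le_sum (fun l' _ => abs_nonneg _) (mem_univ l)).trans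
        (hM m (Sum.inl i)))
      cases l <;> simp [c]
  have hz : zbar k = ∑ l, c l • Sum.elim (x k) (y k) l := by
    simp [hzbar, c, Fintype.sum_sum_type, smul_sum]
  have hu : ∀ r, ∑ l, ‖Sum.elim (gv r) (0 : Fin n → EuclideanSpace ℝ (Fin p)) l‖ = g r := by
    simp [hg, Fintype.sum_sum_type]
  calc ‖x k i - zbar k‖
        = ‖Sum.elim (x k) (y k) (Sum.inl i) - ∑ l, c l • Sum.elim (x k) (y k) l‖ := by
          rw [hz, Sum.elim_inl]
    _ ≤ _ := norm_sub_sum_smul_le_of_recurrence (w := fun k => Sum.elim (x k) (y k))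
        (u := fun k => Sum.elim (gv k) 0) hc hw0 (ddps_stacked_step A Bh ε hyupd hgv) hβ k
    _ = _ := by simp only [hu]; exact sum_range_ite_mul_eq Γ γ g k

theorem ddps_consensus_bound
    {n p : ℕ} (hn : 1 ≤ n) (hp : 1 ≤ p)
    (f : Fin n → EuclideanSpace ℝ (Fin p) → ℝ)
    (hconv : ∀ i, ConvexOn ℝ Set.univ (f i))
    (B : ℝ) (hB : 0 < B)
    (hsubB : ∀ (i : Fin n) (u s : EuclideanSpace ℝ (Fin p)),
      (∀ v, f i u + ⟪s, v - u⟫ ≤ f i v) → ‖s‖ ≤ B)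
    (X : Set (EuclideanSpace ℝ (Fin p)))
    (hXne : X.Nonempty) (hXcl : IsClosed X) (hXcv : Convex ℝ X)
    (hX0 : (0 : EuclideanSpace ℝ (Fin p)) ∈ X)
    (P : EuclideanSpace ℝ (Fin p) → EuclideanSpace ℝ (Fin p))
    (hPmem : ∀ v, P v ∈ X)
    (hPproj : ∀ v w, w ∈ X → ‖P v - v‖ ≤ ‖w - v‖)
    (A Bh : Matrix (Fin n) (Fin n) ℝ)
    (hAnn : ∀ i j, 0 ≤ A i j) (hArow : ∀ i, ∑ j, A i j = 1)
    (hBnn : ∀ i j, 0 ≤ Bh i j) (hBcol : ∀ j, ∑ i, Bh i j = 1)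
    (ε : ℝ) (hε : 0 < ε)
    (α : ℕ → ℝ) (hαnn : ∀ k, 0 ≤ α k) (hαdec : ∀ k, α (k + 1) ≤ α k)
    (x y d : ℕ → Fin n → EuclideanSpace ℝ (Fin p))
    (hx0 : ∀ i, x 0 i = 0) (hy0 : ∀ i, y 0 i = 0)
    (hd : ∀ k i v, f i (x k i) + ⟪d k i, v - x k i⟫ ≤ f i v)
    (hxupd : ∀ k i, x (k + 1) i = P (∑ j, A i j • x k j + ε • y k i - α k • d k i))
    (hyupd : ∀ k i, y (k + 1) i =
      x k i - ∑ j, A i j • x k j + (∑ j, Bh i j • y k j) - ε • y k i)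
    (gv : ℕ → Fin n → EuclideanSpace ℝ (Fin p))
    (hgv : ∀ k i, gv k i = x (k + 1) i - ∑ j, A i j • x k j - ε • y k i)
    (g : ℕ → ℝ) (hg : ∀ k, g k = ∑ i, ‖gv k i‖)
    (zbar : ℕ → EuclideanSpace ℝ (Fin p))
    (hzbar : ∀ k, zbar k = (n : ℝ)⁻¹ • (∑ i, x k i + ∑ i, y k i))
    (Γ γ : ℝ) (hΓ : 0 < Γ) (hγ0 : 0 < γ) (hγ1 : γ < 1)
    (hM : ∀ (k : ℕ) (i : Fin n ⊕ Fin n),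
      ∑ j, |((Matrix.fromBlocks A (ε • (1 : Matrix (Fin n) (Fin n) ℝ))
          ((1 : Matrix (Fin n) (Fin n) ℝ) - A) (Bh - ε • (1 : Matrix (Fin n) (Fin n) ℝ))) ^ k
        - Matrix.fromBlocks (Matrix.of fun _ _ => (n : ℝ)⁻¹)
            (Matrix.of fun _ _ => (n : ℝ)⁻¹) 0 0 :
          Matrix (Fin n ⊕ Fin n) (Fin n ⊕ Fin n) ℝ) i j| ≤ Γ * γ ^ k)
    :
    ∀ (i : Fin n) (k : ℕ),
      ‖x k i - zbar k‖ ≤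
        Γ * (∑ r ∈ Finset.Icc 1 (k - 1), γ ^ (k - r) * g (r - 1)) +
          (if k = 0 then 0 else g (k - 1)) :=
  ddps_consensus_bound_general A Bh hBcol ε x y hx0 hy0 hyupd gv hgv g hg zbar hzbar Γ γ hM
end

section
/- For every agent i ∈ {1,…,n} and every k ≥ 0, the D-DPS auxiliary variable satisfies ‖y_i^k‖ ≤ Γ Σ_{r=1}^{k−1} γ^{k−r} g_{r−1}, where sums over empty index ranges are zero and g_{−1} = 0. -/
/-!
Stack the iterates as `W k = (x k, y k)`. With `gv` the projection error, the iteration reads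
`W (k + 1) = M W k + (gv k, 0)`, so `W k = ∑_{r < k} M ^ (k - 1 - r) (gv r, 0)`. The `y`-block
of this sum only involves the lower-left blocks of the powers of `M`; the limit matrix vanishes
there, so these entries are bounded by `Γ γ ^ (k - 1 - r)`, and the `r = k - 1` term drops out
because the lower-left block of `M ^ 0 = 1` is zero.
-/

open Finset
open scoped RealInnerProductSpace

namespace Matrix

variable {ι R V : Type*} [Fintype ι]

section Semiring

variable [Semiring R] [AddCommMonoid V] [Module R V]

/-- `Matrix.mulVec` for vectors with entries in an `R`-module. -/
def smulVec (M : Matrix ι ι R) (w : ι → V) : ι → V := fun s => ∑ t, M s t • w t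

theorem smulVec_apply (M : Matrix ι ι R) (w : ι → V) (s : ι) :
    M.smulVec w s = ∑ t, M s t • w t := rfl

@[simp]
theorem one_smulVec [DecidableEq ι] (w : ι → V) : (1 : Matrix ι ι R).smulVec w = w := by
  funext s
  simp [smulVec_apply, one_apply, ite_smul]

theorem smulVec_smulVec (M N : Matrix ι ι R) (w : ι → V) :
    M.smulVec (N.smulVec w) = (M * N).smulVec w := by
  funext s
  simp only [smulVec_apply, mul_apply, smul_sum, sum_smul, smul_smul]
  exact sum_comm

theorem smulVec_sum {α : Type*} (M : Matrix ι ι R) (S : Finset α) (w : α → ι → V) :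
    M.smulVec (∑ a ∈ S, w a) = ∑ a ∈ S, M.smulVec (w a) := by
  funext s
  simp only [smulVec_apply, Finset.sum_apply, smul_sum]
  exact sum_comm

theorem eq_sum_pow_smulVec_of_succ [DecidableEq ι] (M : Matrix ι ι R) {W E : ℕ → ι → V}
    (h0 : W 0 = 0) (hstep : ∀ k, W (k + 1) = M.smulVec (W k) + E k) (k : ℕ) :
    W k = ∑ r ∈ range k, (M ^ (k - 1 - r)).smulVec (E r) := by
  induction k with
  | zero => simp [h0]
  | succ k ih =>
    rw [hstep, ih, smulVec_sum, sum_range_succ, Nat.add_sub_cancel, Nat.sub_self, pow_zero,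
      one_smulVec]
    refine congrArg (· + E k) (sum_congr rfl fun r hr => ?_)
    have hexp : k - 1 - r + 1 = k - r := by have := mem_range.mp hr; omega
    rw [smulVec_smulVec, ← pow_succ', hexp]

end Semiring

theorem norm_smulVec_apply_le {𝕜 : Type*} [NormedField 𝕜] [SeminormedAddCommGroup V]
    [NormedSpace 𝕜 V] (M : Matrix ι ι 𝕜) (w : ι → V) (s : ι) :
    ‖M.smulVec w s‖ ≤ ∑ t, ‖M s t‖ * ‖w t‖ :=
  (norm_sum_le _ _).trans_eq (by simp only [norm_smul])

theorem norm_smulVec_sumElim_zero_apply_le {κ : Type*} [Fintype κ] [SeminormedAddCommGroup V]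
    [NormedSpace ℝ V] (Q : Matrix (ι ⊕ κ) (ι ⊕ κ) ℝ) (v : ι → V) {s : ι ⊕ κ} {c : ℝ}
    (hQ : ∀ j, |Q s (Sum.inl j)| ≤ c) :
    ‖Q.smulVec (Sum.elim v 0) s‖ ≤ c * ∑ j, ‖v j‖ :=
  calc ‖Q.smulVec (Sum.elim v 0) s‖ ≤ ∑ j, |Q s (Sum.inl j)| * ‖v j‖ := by
        simpa [Fintype.sum_sum_type] using norm_smulVec_apply_le Q (Sum.elim v 0) s
    _ ≤ c * ∑ j, ‖v j‖ := by
        rw [mul_sum]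
        gcongr with j
        exact hQ j

theorem abs_apply_le_of_sum_abs_sub_le (Q N : Matrix ι ι ℝ) {s t : ι} (hN : N s t = 0) {c : ℝ}
    (h : ∑ u, |(Q - N) s u| ≤ c) : |Q s t| ≤ c := by
  simpa [hN] using (single_le_sum (fun u _ => abs_nonneg ((Q - N) s u)) (mem_univ t)).trans h

end Matrix

open Matrix

/-- The projection error `gv` absorbs the nonlinear part of the `x`-update, so the stacked
iteration `(x, y)` is linear. -/
theorem ddps_stacked_step_s1 {ι V : Type*} [Fintype ι] [DecidableEq ι] [AddCommGroup V] [Module ℝ V]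
    (A Bh : Matrix ι ι ℝ) (ε : ℝ) (x y gv x' y' : ι → V)
    (hx' : ∀ i, gv i = x' i - ∑ j, A i j • x j - ε • y i)
    (hy' : ∀ i, y' i = x i - ∑ j, A i j • x j + (∑ j, Bh i j • y j) - ε • y i) :
    Sum.elim x' y' = (fromBlocks A (ε • 1) (1 - A) (Bh - ε • 1)).smulVec (Sum.elim x y)
      + Sum.elim gv 0 := by
  funext s
  rcases s with i | i
  · simp [smulVec_apply, Fintype.sum_sum_type, one_apply, ite_smul, hx' i]
  · simp only [Sum.elim_inr, hy' i, Pi.add_apply, smulVec_apply, Fintype.sum_sum_type,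
      fromBlocks_apply₂₁, Matrix.sub_apply, one_apply, Sum.elim_inl, sub_smul, ite_smul, one_smul,
      zero_smul, sum_sub_distrib, sum_ite_eq, mem_univ, ↓reduceIte, fromBlocks_apply₂₂,
      Matrix.smul_apply, smul_eq_mul, mul_ite, mul_one, mul_zero, Pi.zero_apply, add_zero]
    abel

theorem ddps_aux_bound_general
    {n p : ℕ}
    (A Bh : Matrix (Fin n) (Fin n) ℝ)
    (ε : ℝ)
    (x y : ℕ → Fin n → EuclideanSpace ℝ (Fin p))
    (hx0 : ∀ i, x 0 i = 0) (hy0 : ∀ i, y 0 i = 0)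
    (hyupd : ∀ k i, y (k + 1) i =
      x k i - ∑ j, A i j • x k j + (∑ j, Bh i j • y k j) - ε • y k i)
    (gv : ℕ → Fin n → EuclideanSpace ℝ (Fin p))
    (hgv : ∀ k i, gv k i = x (k + 1) i - ∑ j, A i j • x k j - ε • y k i)
    (g : ℕ → ℝ) (hg : ∀ k, g k = ∑ i, ‖gv k i‖)
    (Γ γ : ℝ)
    (hM : ∀ (k : ℕ) (i : Fin n ⊕ Fin n),
      ∑ j, |((Matrix.fromBlocks A (ε • (1 : Matrix (Fin n) (Fin n) ℝ))
          ((1 : Matrix (Fin n) (Fin n) ℝ) - A) (Bh - ε • (1 : Matrix (Fin n) (Fin n) ℝ))) ^ k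
        - Matrix.fromBlocks (Matrix.of fun _ _ => (n : ℝ)⁻¹)
            (Matrix.of fun _ _ => (n : ℝ)⁻¹) 0 0 :
          Matrix (Fin n ⊕ Fin n) (Fin n ⊕ Fin n) ℝ) i j| ≤ Γ * γ ^ k)
    :
    ∀ (i : Fin n) (k : ℕ),
      ‖y k i‖ ≤ Γ * ∑ r ∈ Finset.Icc 1 (k - 1), γ ^ (k - r) * g (r - 1) := by
  intro i k
  set M : Matrix (Fin n ⊕ Fin n) (Fin n ⊕ Fin n) ℝ := fromBlocks A (ε • 1) (1 - A) (Bh - ε • 1)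
  have hclosed := M.eq_sum_pow_smulVec_of_succ (W := fun k => Sum.elim (x k) (y k))
    (E := fun k => Sum.elim (gv k) 0) (by funext s; cases s <;> simp [hx0, hy0])
    (fun k => ddps_stacked_step_s1 A Bh ε (x k) (y k) (gv k) _ _ (hgv k) (hyupd k))
  have hentry (q : ℕ) (j : Fin n) : |(M ^ q) (Sum.inr i) (Sum.inl j)| ≤ Γ * γ ^ q :=
    abs_apply_le_of_sum_abs_sub_le _ _ (by simp) (hM q (Sum.inr i))
  rcases k with _ | m
  · simp [hy0]
  have hy : y (m + 1) i
      = ∑ r ∈ range m, (M ^ (m - r)).smulVec (Sum.elim (gv r) 0) (Sum.inr i) := by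
    simpa [sum_range_succ] using congrFun (hclosed (m + 1)) (Sum.inr i)
  have hreindex : ∑ r ∈ Icc 1 (m + 1 - 1), γ ^ (m + 1 - r) * g (r - 1)
      = ∑ r ∈ range m, γ ^ (m - r) * g r := by
    rw [Nat.add_sub_cancel, ← Ico_add_one_right_eq_Icc, sum_Ico_eq_sum_range, Nat.add_sub_cancel]
    refine sum_congr rfl fun r _ => ?_
    rw [add_comm 1 r, Nat.add_sub_add_right, Nat.add_sub_cancel]
  rw [hy, hreindex, mul_sum]
  refine (norm_sum_le _ _).trans (sum_le_sum fun r _ => ?_)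
  rw [hg, ← mul_assoc]
  exact norm_smulVec_sumElim_zero_apply_le _ _ (hentry _)

theorem ddps_aux_bound
    {n p : ℕ} (hn : 1 ≤ n) (hp : 1 ≤ p)
    (f : Fin n → EuclideanSpace ℝ (Fin p) → ℝ)
    (hconv : ∀ i, ConvexOn ℝ Set.univ (f i))
    (B : ℝ) (hB : 0 < B)
    (hsubB : ∀ (i : Fin n) (u s : EuclideanSpace ℝ (Fin p)),
      (∀ v, f i u + ⟪s, v - u⟫ ≤ f i v) → ‖s‖ ≤ B)
    (X : Set (EuclideanSpace ℝ (Fin p)))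
    (hXne : X.Nonempty) (hXcl : IsClosed X) (hXcv : Convex ℝ X)
    (hX0 : (0 : EuclideanSpace ℝ (Fin p)) ∈ X)
    (P : EuclideanSpace ℝ (Fin p) → EuclideanSpace ℝ (Fin p))
    (hPmem : ∀ v, P v ∈ X)
    (hPproj : ∀ v w, w ∈ X → ‖P v - v‖ ≤ ‖w - v‖)
    (A Bh : Matrix (Fin n) (Fin n) ℝ)
    (hAnn : ∀ i j, 0 ≤ A i j) (hArow : ∀ i, ∑ j, A i j = 1)
    (hBnn : ∀ i j, 0 ≤ Bh i j) (hBcol : ∀ j, ∑ i, Bh i j = 1)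
    (ε : ℝ) (hε : 0 < ε)
    (α : ℕ → ℝ) (hαnn : ∀ k, 0 ≤ α k) (hαdec : ∀ k, α (k + 1) ≤ α k)
    (x y d : ℕ → Fin n → EuclideanSpace ℝ (Fin p))
    (hx0 : ∀ i, x 0 i = 0) (hy0 : ∀ i, y 0 i = 0)
    (hd : ∀ k i v, f i (x k i) + ⟪d k i, v - x k i⟫ ≤ f i v)
    (hxupd : ∀ k i, x (k + 1) i = P (∑ j, A i j • x k j + ε • y k i - α k • d k i))
    (hyupd : ∀ k i, y (k + 1) i =
      x k i - ∑ j, A i j • x k j + (∑ j, Bh i j • y k j) - ε • y k i)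
    (gv : ℕ → Fin n → EuclideanSpace ℝ (Fin p))
    (hgv : ∀ k i, gv k i = x (k + 1) i - ∑ j, A i j • x k j - ε • y k i)
    (g : ℕ → ℝ) (hg : ∀ k, g k = ∑ i, ‖gv k i‖)
    (zbar : ℕ → EuclideanSpace ℝ (Fin p))
    (hzbar : ∀ k, zbar k = (n : ℝ)⁻¹ • (∑ i, x k i + ∑ i, y k i))
    (Γ γ : ℝ) (hΓ : 0 < Γ) (hγ0 : 0 < γ) (hγ1 : γ < 1)
    (hM : ∀ (k : ℕ) (i : Fin n ⊕ Fin n),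
      ∑ j, |((Matrix.fromBlocks A (ε • (1 : Matrix (Fin n) (Fin n) ℝ))
          ((1 : Matrix (Fin n) (Fin n) ℝ) - A) (Bh - ε • (1 : Matrix (Fin n) (Fin n) ℝ))) ^ k
        - Matrix.fromBlocks (Matrix.of fun _ _ => (n : ℝ)⁻¹)
            (Matrix.of fun _ _ => (n : ℝ)⁻¹) 0 0 :
          Matrix (Fin n ⊕ Fin n) (Fin n ⊕ Fin n) ℝ) i j| ≤ Γ * γ ^ k)
    :
    ∀ (i : Fin n) (k : ℕ),
      ‖y k i‖ ≤ Γ * ∑ r ∈ Finset.Icc 1 (k - 1), γ ^ (k - r) * g (r - 1) :=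
  ddps_aux_bound_general A Bh ε x y hx0 hy0 hyupd gv hgv g hg Γ γ hM
end

section
/- Suppose in addition that ε < (1−γ)/(2nΓγ). Then there exists a constant C > 0 such that for every K ≥ 0, Σ_{k=0}^K g_k² ≤ C Σ_{k=0}^K α_k². -/
/-!
Stack the iterates as `w_k = (x_k, y_k)`. Since `x_{k+1} = A x_k + ε y_k + g_k`, the iteration
is the linear recursion `w_{k+1} = M w_k + (g_k, 0)` with `w_0 = 0`, so
`y_k = ∑_{s<k} (M^{k-1-s})₂₁ g_s`. The lower-left block vanishes for `M^0 = 1` and for the limit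
matrix, hence is at most `Γ γ^t` for `t ≥ 1` and `0` for `t = 0`. Together with the projection
estimate `‖g_i^k‖ ≤ ε ‖y_i^k‖ + 2 B α_k` this gives
`g_k ≤ 2 n B α_k + ε n Γ ∑_{s<k-1} γ^{k-1-s} g_s`. By Young's inequality the convolution term has
`ℓ²`-norm at most `ε n Γ γ / (1 - γ) < 1/2` times that of `g`, so it can be absorbed:
`∑ g_k² ≤ 16 n² B² ∑ α_k²`.
-/

open Finset Matrix
open scoped RealInnerProductSpace

noncomputable section

def causalConv (h u : ℕ → ℝ) (k : ℕ) : ℝ := ∑ s ∈ range k, h (k - 1 - s) * u s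

lemma causalConv_const_mul (c : ℝ) (h u : ℕ → ℝ) (k : ℕ) :
    causalConv (fun t => c * h t) u k = c * causalConv h u k := by
  simp only [causalConv, mul_sum, mul_assoc]

section CausalConv

variable {h u : ℕ → ℝ} {q : ℝ}

lemma sq_causalConv_le (hh : ∀ t, 0 ≤ h t) (hq : ∀ N, ∑ t ∈ range N, h t ≤ q) (k : ℕ) :
    causalConv h u k ^ 2 ≤ q * causalConv h (fun s => u s ^ 2) k := by
  have hlag : ∑ s ∈ range k, h (k - 1 - s) ≤ q := by
    rw [← sum_range_reflect]
    refine (sum_congr rfl fun s hs => ?_).trans_le (hq k)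
    rw [show k - 1 - (k - 1 - s) = s by have := mem_range.1 hs; omega]
  have hwt : 0 ≤ causalConv h (fun s => u s ^ 2) k :=
    sum_nonneg fun s _ => mul_nonneg (hh _) (sq_nonneg _)
  calc causalConv h u k ^ 2
      ≤ (∑ s ∈ range k, h (k - 1 - s)) * causalConv h (fun s => u s ^ 2) k :=
        sum_sq_le_sum_mul_sum_of_sq_le_mul _ (fun s _ => hh _)
          (fun s _ => mul_nonneg (hh _) (sq_nonneg _)) fun s _ => le_of_eq (by ring)
    _ ≤ q * causalConv h (fun s => u s ^ 2) k := mul_le_mul_of_nonneg_right hlag hwt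

lemma sum_causalConv_le (hq : ∀ N, ∑ t ∈ range N, h t ≤ q) (hu : ∀ s, 0 ≤ u s) (N : ℕ) :
    ∑ k ∈ range N, causalConv h u k ≤ q * ∑ s ∈ range N, u s := by
  unfold causalConv
  rw [sum_comm' (t' := range N) (s' := fun s => Ico (s + 1) N)
    (by intro k s; simp only [mem_range, mem_Ico]; omega), mul_sum]
  refine sum_le_sum fun s _ => ?_
  rw [← sum_mul]
  refine mul_le_mul_of_nonneg_right ?_ (hu s)
  rw [sum_Ico_eq_sum_range]
  refine (sum_congr rfl fun t _ => ?_).trans_le (hq (N - (s + 1)))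
  rw [show s + 1 + t - 1 - s = t by omega]

lemma sum_sq_causalConv_le (hh : ∀ t, 0 ≤ h t) (hq : ∀ N, ∑ t ∈ range N, h t ≤ q)
    (N : ℕ) : ∑ k ∈ range N, causalConv h u k ^ 2 ≤ q ^ 2 * ∑ k ∈ range N, u k ^ 2 := by
  have hq0 : 0 ≤ q := by simpa using hq 0
  calc ∑ k ∈ range N, causalConv h u k ^ 2
      ≤ ∑ k ∈ range N, q * causalConv h (fun s => u s ^ 2) k :=
        sum_le_sum fun k _ => sq_causalConv_le hh hq k
    _ = q * ∑ k ∈ range N, causalConv h (fun s => u s ^ 2) k := (mul_sum ..).symm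
    _ ≤ q * (q * ∑ k ∈ range N, u k ^ 2) :=
        mul_le_mul_of_nonneg_left (sum_causalConv_le hq (fun s => sq_nonneg _) N) hq0
    _ = q ^ 2 * ∑ k ∈ range N, u k ^ 2 := by ring

lemma sum_sq_le_of_le_add_causalConv {a : ℕ → ℝ} (hh : ∀ t, 0 ≤ h t)
    (hq : ∀ N, ∑ t ∈ range N, h t ≤ q) (hq2 : q ≤ 1 / 2) (hu : ∀ k, 0 ≤ u k)
    (hrec : ∀ k, u k ≤ a k + causalConv h u k) (N : ℕ) :
    ∑ k ∈ range N, u k ^ 2 ≤ 4 * ∑ k ∈ range N, a k ^ 2 := by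
  have hq0 : 0 ≤ q := by simpa using hq 0
  have hsq : ∀ k, u k ^ 2 ≤ 2 * a k ^ 2 + 2 * causalConv h u k ^ 2 := fun k => by
    nlinarith [hu k, hrec k, sq_nonneg (a k - causalConv h u k)]
  have hsum := sum_le_sum fun k (_ : k ∈ range N) => hsq k
  rw [sum_add_distrib, ← mul_sum, ← mul_sum] at hsum
  have hconv := sum_sq_causalConv_le hh hq N (u := u)
  have hq2' : q ^ 2 ≤ 1 / 4 := by nlinarith
  have hU : 0 ≤ ∑ k ∈ range N, u k ^ 2 := sum_nonneg fun k _ => sq_nonneg _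
  nlinarith [mul_le_mul_of_nonneg_right hq2' hU]

end CausalConv

def geomKernel (γ : ℝ) (t : ℕ) : ℝ := if t = 0 then 0 else γ ^ t

lemma geomKernel_nonneg {γ : ℝ} (hγ : 0 ≤ γ) (t : ℕ) : 0 ≤ geomKernel γ t := by
  unfold geomKernel; split_ifs <;> positivity

lemma sum_range_geomKernel_le {γ : ℝ} (hγ0 : 0 ≤ γ) (hγ1 : γ < 1) (N : ℕ) :
    ∑ t ∈ range N, geomKernel γ t ≤ γ / (1 - γ) := by
  cases N with
  | zero => simpa using div_nonneg hγ0 (sub_nonneg.2 hγ1.le)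
  | succ N =>
    have h := geom_sum_Ico_le_of_lt_one (m := 1) (n := N + 1) hγ0 hγ1
    rw [sum_Ico_eq_sum_range, pow_one] at h
    simpa [geomKernel, sum_range_succ', add_comm] using h

namespace Matrix

variable {m R E : Type*} [Fintype m] [DecidableEq m] [CommSemiring R] [AddCommMonoid E]
  [Module R E]

variable (E) in
/-- The Kronecker product `M ⊗ I` acting on `m`-tuples of vectors. -/
def toEndPi : Matrix m m R →ₐ[R] Module.End R (m → E) :=
  AlgHom.ofLinearMap
    { toFun := fun M =>
        { toFun := fun v i => ∑ j, M i j • v j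
          map_add' := fun u v => by ext i; simp [smul_add, sum_add_distrib]
          map_smul' := fun c v => by ext i; simp [smul_sum, smul_comm c] }
      map_add' := fun M N => LinearMap.ext fun v => funext fun i => by
        simp [add_smul, sum_add_distrib]
      map_smul' := fun c M => LinearMap.ext fun v => funext fun i => by
        simp [mul_smul, smul_sum] }
    (LinearMap.ext fun v => funext fun i => by simp [one_apply, ite_smul])
    (fun M N => LinearMap.ext fun v => funext fun i => by
      simp only [mul_apply, sum_smul, mul_smul, LinearMap.coe_mk, AddHom.coe_mk,
        Module.End.mul_apply, smul_sum]
      exact sum_comm)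

@[simp]
lemma toEndPi_apply (M : Matrix m m R) (v : m → E) (i : m) :
    toEndPi E M v i = ∑ j, M i j • v j := rfl

lemma toEndPi_fromBlocks (A B C D : Matrix m m R) (u v : m → E) :
    toEndPi E (fromBlocks A B C D) (Sum.elim u v) =
      Sum.elim (toEndPi E A u + toEndPi E B v) (toEndPi E C u + toEndPi E D v) := by
  ext (i | i) <;> simp [Fintype.sum_sum_type]

end Matrix

theorem Module.End.eq_sum_pow_apply_of_succ_eq {R V : Type*} [Semiring R] [AddCommMonoid V]
    [Module R V] (T : Module.End R V) {w e : ℕ → V} (h0 : w 0 = 0)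
    (hstep : ∀ k, w (k + 1) = T (w k) + e k) (k : ℕ) :
    w k = ∑ s ∈ range k, (T ^ (k - 1 - s)) (e s) := by
  induction k with
  | zero => simp [h0]
  | succ k ih =>
    rw [hstep, ih, map_sum, sum_range_succ, Nat.add_sub_cancel, Nat.sub_self, pow_zero,
      Module.End.one_apply]
    congr 1
    refine sum_congr rfl fun s hs => ?_
    rw [← Module.End.mul_apply, ← pow_succ', show k - 1 - s + 1 = k - s by
      have := mem_range.1 hs; omega]

lemma abs_pow_inr_inl_le {m : Type*} [Fintype m] [DecidableEq m]
    {M L : Matrix (m ⊕ m) (m ⊕ m) ℝ} {Γ γ : ℝ} (hL : ∀ i j, L (Sum.inr i) (Sum.inl j) = 0)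
    (hM : ∀ k r, ∑ c, |(M ^ k - L) r c| ≤ Γ * γ ^ k) (t : ℕ) (i j : m) :
    |(M ^ t) (Sum.inr i) (Sum.inl j)| ≤ Γ * geomKernel γ t := by
  unfold geomKernel
  split_ifs with ht
  · simp [ht]
  · calc |(M ^ t) (Sum.inr i) (Sum.inl j)| = |(M ^ t - L) (Sum.inr i) (Sum.inl j)| := by
          simp [hL]
      _ ≤ ∑ c, |(M ^ t - L) (Sum.inr i) c| :=
          single_le_sum (fun c _ => abs_nonneg ((M ^ t - L) (Sum.inr i) c)) (mem_univ _)
      _ ≤ Γ * γ ^ t := hM t (Sum.inr i)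

lemma norm_toEndPi_elim_zero_le {m E : Type*} [Fintype m] [DecidableEq m]
    [SeminormedAddCommGroup E] [NormedSpace ℝ E] {N : Matrix (m ⊕ m) (m ⊕ m) ℝ} {c : ℝ}
    {i : m} (hN : ∀ j, |N (Sum.inr i) (Sum.inl j)| ≤ c) (u : m → E) :
    ‖toEndPi E N (Sum.elim u 0) (Sum.inr i)‖ ≤ c * ∑ j, ‖u j‖ := by
  simp only [toEndPi_apply, Fintype.sum_sum_type, Sum.elim_inl, Sum.elim_inr, Pi.zero_apply,
    smul_zero, sum_const_zero, add_zero, mul_sum]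
  refine (norm_sum_le _ _).trans (sum_le_sum fun j _ => ?_)
  rw [norm_smul, Real.norm_eq_abs]
  exact mul_le_mul_of_nonneg_right (hN j) (norm_nonneg _)

theorem norm_surplus_le_causalConv {m E : Type*} [Fintype m] [DecidableEq m]
    [SeminormedAddCommGroup E] [NormedSpace ℝ E] {A Bh : Matrix m m ℝ}
    {L : Matrix (m ⊕ m) (m ⊕ m) ℝ} {ε Γ γ : ℝ} {x y gv : ℕ → m → E}
    (hx0 : ∀ i, x 0 i = 0) (hy0 : ∀ i, y 0 i = 0)
    (hgv : ∀ k i, gv k i = x (k + 1) i - ∑ j, A i j • x k j - ε • y k i)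
    (hyupd : ∀ k i, y (k + 1) i =
      x k i - ∑ j, A i j • x k j + (∑ j, Bh i j • y k j) - ε • y k i)
    (hL : ∀ i j, L (Sum.inr i) (Sum.inl j) = 0)
    (hM : ∀ k r, ∑ c, |(fromBlocks A (ε • 1) (1 - A) (Bh - ε • 1) ^ k - L :
      Matrix (m ⊕ m) (m ⊕ m) ℝ) r c| ≤ Γ * γ ^ k)
    (k : ℕ) (i : m) :
    ‖y k i‖ ≤ Γ * causalConv (geomKernel γ) (fun s => ∑ j, ‖gv s j‖) k := by
  set M : Matrix (m ⊕ m) (m ⊕ m) ℝ := fromBlocks A (ε • 1) (1 - A) (Bh - ε • 1)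
  set w : ℕ → m ⊕ m → E := fun k => Sum.elim (x k) (y k)
  set e : ℕ → m ⊕ m → E := fun k => Sum.elim (gv k) 0
  have hw0 : w 0 = 0 := by ext (j | j) <;> simp [w, hx0, hy0]
  have hstep : ∀ k, w (k + 1) = toEndPi E M (w k) + e k := fun k => by
    ext (j | j)
    · simp [w, e, M, toEndPi_fromBlocks, hgv]
    · simp [w, e, M, toEndPi_fromBlocks, hyupd]
      abel
  rw [show y k i = w k (Sum.inr i) from rfl,
    (toEndPi E M).eq_sum_pow_apply_of_succ_eq hw0 hstep, Finset.sum_apply,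
    ← causalConv_const_mul, causalConv]
  refine (norm_sum_le _ _).trans (sum_le_sum fun s _ => ?_)
  rw [← map_pow]
  exact norm_toEndPi_elim_zero_le (abs_pow_inr_inl_le hL hM _ i) _

lemma norm_nearest_sub_le {E : Type*} [SeminormedAddCommGroup E] [NormedSpace ℝ E] {X : Set E}
    {P : E → E} (hP : ∀ v w, w ∈ X → ‖P v - v‖ ≤ ‖w - v‖) {s y d : E} {ε a B : ℝ}
    (hs : s ∈ X) (hε : 0 ≤ ε) (ha : 0 ≤ a) (hd : ‖d‖ ≤ B) :
    ‖P (s + ε • y - a • d) - s - ε • y‖ ≤ ε * ‖y‖ + 2 * B * a := by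
  set v := s + ε • y - a • d
  calc ‖P v - s - ε • y‖ ≤ ‖P v - v‖ + ‖a • d‖ := by
        simpa [v, sub_sub] using norm_sub_le_norm_sub_add_norm_sub (P v) v (s + ε • y)
    _ ≤ ‖a • d - ε • y‖ + ‖a • d‖ := by
        gcongr
        simpa [v, sub_sub_eq_add_sub, add_sub_cancel_left] using hP v s hs
    _ ≤ ε * ‖y‖ + 2 * B * a := by
        have had : ‖a • d‖ ≤ a * B := by
          rw [norm_smul, Real.norm_of_nonneg ha]; exact mul_le_mul_of_nonneg_left hd ha
        have hεy : ‖ε • y‖ = ε * ‖y‖ := by rw [norm_smul, Real.norm_of_nonneg hε]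
        linarith [norm_sub_le (a • d) (ε • y)]

end

theorem ddps_perturbation_square_sum_general
    {n p : ℕ} (hn : 1 ≤ n)
    (f : Fin n → EuclideanSpace ℝ (Fin p) → ℝ)
    (B : ℝ) (hB : 0 < B)
    (hsubB : ∀ (i : Fin n) (u s : EuclideanSpace ℝ (Fin p)),
      (∀ v, f i u + ⟪s, v - u⟫ ≤ f i v) → ‖s‖ ≤ B)
    (X : Set (EuclideanSpace ℝ (Fin p)))
    (hXcv : Convex ℝ X)
    (hX0 : (0 : EuclideanSpace ℝ (Fin p)) ∈ X)
    (P : EuclideanSpace ℝ (Fin p) → EuclideanSpace ℝ (Fin p))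
    (hPmem : ∀ v, P v ∈ X)
    (hPproj : ∀ v w, w ∈ X → ‖P v - v‖ ≤ ‖w - v‖)
    (A Bh : Matrix (Fin n) (Fin n) ℝ)
    (hAnn : ∀ i j, 0 ≤ A i j) (hArow : ∀ i, ∑ j, A i j = 1)
    (ε : ℝ) (hε : 0 < ε)
    (α : ℕ → ℝ) (hαnn : ∀ k, 0 ≤ α k)
    (x y d : ℕ → Fin n → EuclideanSpace ℝ (Fin p))
    (hx0 : ∀ i, x 0 i = 0) (hy0 : ∀ i, y 0 i = 0)
    (hd : ∀ k i v, f i (x k i) + ⟪d k i, v - x k i⟫ ≤ f i v)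
    (hxupd : ∀ k i, x (k + 1) i = P (∑ j, A i j • x k j + ε • y k i - α k • d k i))
    (hyupd : ∀ k i, y (k + 1) i =
      x k i - ∑ j, A i j • x k j + (∑ j, Bh i j • y k j) - ε • y k i)
    (gv : ℕ → Fin n → EuclideanSpace ℝ (Fin p))
    (hgv : ∀ k i, gv k i = x (k + 1) i - ∑ j, A i j • x k j - ε • y k i)
    (g : ℕ → ℝ) (hg : ∀ k, g k = ∑ i, ‖gv k i‖)
    (Γ γ : ℝ) (hΓ : 0 < Γ) (hγ0 : 0 < γ) (hγ1 : γ < 1)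
    (hM : ∀ (k : ℕ) (i : Fin n ⊕ Fin n),
      ∑ j, |((Matrix.fromBlocks A (ε • (1 : Matrix (Fin n) (Fin n) ℝ))
          ((1 : Matrix (Fin n) (Fin n) ℝ) - A) (Bh - ε • (1 : Matrix (Fin n) (Fin n) ℝ))) ^ k
        - Matrix.fromBlocks (Matrix.of fun _ _ => (n : ℝ)⁻¹)
            (Matrix.of fun _ _ => (n : ℝ)⁻¹) 0 0 :
          Matrix (Fin n ⊕ Fin n) (Fin n ⊕ Fin n) ℝ) i j| ≤ Γ * γ ^ k)
    (hεsmall : ε < (1 - γ) / (2 * n * Γ * γ))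
    :
    ∃ C > 0, ∀ K : ℕ,
      ∑ k ∈ Finset.range (K + 1), (g k) ^ 2 ≤ C * ∑ k ∈ Finset.range (K + 1), (α k) ^ 2 := by
  have hn0 : (0 : ℝ) < n := by exact_mod_cast hn
  have hxX : ∀ k i, x k i ∈ X
    | 0, i => by simpa [hx0] using hX0
    | k + 1, i => by simpa [hxupd] using hPmem _
  have hgv_le : ∀ k i, ‖gv k i‖ ≤ ε * ‖y k i‖ + 2 * B * α k := fun k i => by
    rw [hgv, hxupd]
    exact norm_nearest_sub_le hPproj (hXcv.sum_mem (fun j _ => hAnn i j) (hArow i)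
      fun j _ => hxX k j) hε.le (hαnn k) (hsubB i _ _ (hd k i))
  have hrec : ∀ k, g k ≤ 2 * n * B * α k + causalConv (fun t => ε * n * Γ * geomKernel γ t) g k :=
    fun k => by
      have hy := norm_surplus_le_causalConv hx0 hy0 hgv hyupd (fun _ _ => rfl) hM k
      rw [← funext hg] at hy
      calc g k ≤ ∑ _i : Fin n, (ε * (Γ * causalConv (geomKernel γ) g k) + 2 * B * α k) := by
            rw [hg]; gcongr with i; exact (hgv_le k i).trans (by gcongr; exact hy i)
        _ = _ := by simp [causalConv_const_mul]; ring
  have hsmall : ε * n * Γ * (γ / (1 - γ)) ≤ 1 / 2 := by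
    rw [lt_div_iff₀ (by positivity)] at hεsmall
    rw [mul_div_assoc', div_le_iff₀ (by linarith)]
    linarith
  refine ⟨16 * n ^ 2 * B ^ 2, by positivity, fun K => ?_⟩
  calc ∑ k ∈ range (K + 1), g k ^ 2 ≤ 4 * ∑ k ∈ range (K + 1), (2 * n * B * α k) ^ 2 :=
        sum_sq_le_of_le_add_causalConv
          (fun t => mul_nonneg (by positivity) (geomKernel_nonneg hγ0.le t))
          (fun N => by
            rw [← mul_sum]
            exact mul_le_mul_of_nonneg_left (sum_range_geomKernel_le hγ0.le hγ1 N) (by positivity))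
          hsmall (fun k => hg k ▸ sum_nonneg fun i _ => norm_nonneg _) hrec _
    _ = 16 * n ^ 2 * B ^ 2 * ∑ k ∈ range (K + 1), α k ^ 2 := by
        simp only [mul_sum]; exact sum_congr rfl fun k _ => by ring

theorem ddps_perturbation_square_sum
    {n p : ℕ} (hn : 1 ≤ n) (hp : 1 ≤ p)
    (f : Fin n → EuclideanSpace ℝ (Fin p) → ℝ)
    (hconv : ∀ i, ConvexOn ℝ Set.univ (f i))
    (B : ℝ) (hB : 0 < B)
    (hsubB : ∀ (i : Fin n) (u s : EuclideanSpace ℝ (Fin p)),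
      (∀ v, f i u + ⟪s, v - u⟫ ≤ f i v) → ‖s‖ ≤ B)
    (X : Set (EuclideanSpace ℝ (Fin p)))
    (hXne : X.Nonempty) (hXcl : IsClosed X) (hXcv : Convex ℝ X)
    (hX0 : (0 : EuclideanSpace ℝ (Fin p)) ∈ X)
    (P : EuclideanSpace ℝ (Fin p) → EuclideanSpace ℝ (Fin p))
    (hPmem : ∀ v, P v ∈ X)
    (hPproj : ∀ v w, w ∈ X → ‖P v - v‖ ≤ ‖w - v‖)
    (A Bh : Matrix (Fin n) (Fin n) ℝ)
    (hAnn : ∀ i j, 0 ≤ A i j) (hArow : ∀ i, ∑ j, A i j = 1)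
    (hBnn : ∀ i j, 0 ≤ Bh i j) (hBcol : ∀ j, ∑ i, Bh i j = 1)
    (ε : ℝ) (hε : 0 < ε)
    (α : ℕ → ℝ) (hαnn : ∀ k, 0 ≤ α k) (hαdec : ∀ k, α (k + 1) ≤ α k)
    (x y d : ℕ → Fin n → EuclideanSpace ℝ (Fin p))
    (hx0 : ∀ i, x 0 i = 0) (hy0 : ∀ i, y 0 i = 0)
    (hd : ∀ k i v, f i (x k i) + ⟪d k i, v - x k i⟫ ≤ f i v)
    (hxupd : ∀ k i, x (k + 1) i = P (∑ j, A i j • x k j + ε • y k i - α k • d k i))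
    (hyupd : ∀ k i, y (k + 1) i =
      x k i - ∑ j, A i j • x k j + (∑ j, Bh i j • y k j) - ε • y k i)
    (gv : ℕ → Fin n → EuclideanSpace ℝ (Fin p))
    (hgv : ∀ k i, gv k i = x (k + 1) i - ∑ j, A i j • x k j - ε • y k i)
    (g : ℕ → ℝ) (hg : ∀ k, g k = ∑ i, ‖gv k i‖)
    (zbar : ℕ → EuclideanSpace ℝ (Fin p))
    (hzbar : ∀ k, zbar k = (n : ℝ)⁻¹ • (∑ i, x k i + ∑ i, y k i))
    (Γ γ : ℝ) (hΓ : 0 < Γ) (hγ0 : 0 < γ) (hγ1 : γ < 1)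
    (hM : ∀ (k : ℕ) (i : Fin n ⊕ Fin n),
      ∑ j, |((Matrix.fromBlocks A (ε • (1 : Matrix (Fin n) (Fin n) ℝ))
          ((1 : Matrix (Fin n) (Fin n) ℝ) - A) (Bh - ε • (1 : Matrix (Fin n) (Fin n) ℝ))) ^ k
        - Matrix.fromBlocks (Matrix.of fun _ _ => (n : ℝ)⁻¹)
            (Matrix.of fun _ _ => (n : ℝ)⁻¹) 0 0 :
          Matrix (Fin n ⊕ Fin n) (Fin n ⊕ Fin n) ℝ) i j| ≤ Γ * γ ^ k)
    (hεsmall : ε < (1 - γ) / (2 * n * Γ * γ))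
    :
    ∃ C > 0, ∀ K : ℕ,
      ∑ k ∈ Finset.range (K + 1), (g k) ^ 2 ≤ C * ∑ k ∈ Finset.range (K + 1), (α k) ^ 2 :=
  ddps_perturbation_square_sum_general hn f B hB hsubB X hXcv hX0 P hPmem hPproj A Bh hAnn hArow ε
    hε α hαnn x y d hx0 hy0 hd hxupd hyupd gv hgv g hg Γ γ hΓ hγ0 hγ1 hM hεsmall
end

section
/- Suppose in addition that ε < (1−γ)/(2nΓγ) and Σ_{k=0}^∞ α_k² < ∞. Then for every agent i ∈ {1,…,n}, lim_{k→∞} ‖x_i^k − z̄^k‖ = 0, i.e., the agents reach consensus with the accumulation state. -/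
/-!
Stack the states as `V k = (x k, y k)` and the projection residuals as `e k = (gv k, 0)`, so that
`V (k + 1) = M • V k + e k` with `V 0 = 0`, where `M` is the augmented matrix. The consensus
matrix `L` (blocks `𝟙𝟙ᵀ/n, 𝟙𝟙ᵀ/n` over zero blocks) satisfies `L * M = L` because the columns
of `B̂` sum to one, hence `V k - L • V k = ∑ s < k, (M ^ (k - 1 - s) - L) • e s`. Its top block is
`x k - z̄ k` and its bottom block is `y k`, so both are controlled by the geometric convolution
`S k = ∑ s < k, γ ^ (k - 1 - s) * g s`, the bottom one with an extra factor `γ`.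

The nearest-point property of `P` gives `g (k + 1) ≤ ε ∑ ‖y (k + 1) i‖ + 2nB|α (k + 1)|`, whence
`S (k + 2) ≤ γ S (k + 1) + εnΓγ S k + o(1)`. Since `γ + εnΓγ < 1`, this forces `S k → 0`.
-/

open Finset Filter Topology
open scoped Matrix.Module RealInnerProductSpace

theorem tendsto_zero_of_le_mul_add {u β : ℕ → ℝ} {ρ : ℝ} (hu : ∀ k, 0 ≤ u k) (hρ0 : 0 ≤ ρ)
    (hρ1 : ρ < 1) (hrec : ∀ k, u (k + 1) ≤ ρ * u k + β k) (hβ : Tendsto β atTop (𝓝 0)) :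
    Tendsto u atTop (𝓝 0) := by
  refine tendsto_order.2 ⟨fun a ha => Eventually.of_forall fun k => ha.trans_le (hu k),
    fun η hη => ?_⟩
  have hsmall : 0 < (1 - ρ) * (η / 2) := mul_pos (by linarith) (half_pos hη)
  obtain ⟨N, hN⟩ := eventually_atTop.1 (hβ.eventually (ge_mem_nhds hsmall))
  have hcontr : ∀ k ≥ N, u k - η / 2 ≤ ρ ^ (k - N) * u N := by
    intro k hk
    induction k, hk using Nat.le_induction with
    | base => rw [Nat.sub_self, pow_zero, one_mul]; linarith
    | succ k hk ih =>
      rw [Nat.sub_add_comm hk, pow_succ']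
      nlinarith [hrec k, hN k hk, mul_le_mul_of_nonneg_left ih hρ0]
  have hpow : Tendsto (fun k => ρ ^ (k - N) * u N) atTop (𝓝 0) := by
    simpa using ((tendsto_pow_atTop_nhds_zero_of_lt_one hρ0 hρ1).comp
      (tendsto_sub_atTop_nat N)).mul_const (u N)
  filter_upwards [eventually_ge_atTop N, hpow.eventually (gt_mem_nhds (half_pos hη))]
    with k hk hk'
  linarith [hcontr k hk]

theorem tendsto_zero_of_le_two_step {u β : ℕ → ℝ} {γ a : ℝ} (hu : ∀ k, 0 ≤ u k) (hγ : 0 ≤ γ)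
    (ha : 0 ≤ a) (hγa : γ + a < 1) (hrec : ∀ k, u (k + 2) ≤ γ * u (k + 1) + a * u k + β k)
    (hβ : Tendsto β atTop (𝓝 0)) : Tendsto u atTop (𝓝 0) := by
  set t := (1 - γ + a) / 2 with ht_def
  have ht : 0 ≤ t := by linarith
  -- `a ≤ (γ + t) * t` because `γ ≤ 1 - a`, so `u (k + 1) + t * u k` contracts by `γ + t < 1`
  have hU : Tendsto (fun k => u (k + 1) + t * u k) atTop (𝓝 0) := by
    refine tendsto_zero_of_le_mul_add (ρ := γ + t)
      (fun k => add_nonneg (hu _) (mul_nonneg ht (hu k))) (by linarith) (by linarith)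
      (fun k => ?_) hβ
    have hkey : 0 ≤ ((γ + t) * t - a) * u k := by
      refine mul_nonneg ?_ (hu k)
      nlinarith [mul_nonneg (show 0 ≤ 1 - a - γ by linarith) (show 0 ≤ 1 - a + γ by linarith)]
    nlinarith [hrec k]
  exact (tendsto_add_atTop_iff_nat 1).1 <| squeeze_zero (fun k => hu (k + 1))
    (fun k => le_add_of_nonneg_right (mul_nonneg ht (hu k))) hU

def geomConv (γ : ℝ) (g : ℕ → ℝ) (k : ℕ) : ℝ :=
  ∑ s ∈ range k, γ ^ (k - 1 - s) * g s

theorem geomConv_succ (γ : ℝ) (g : ℕ → ℝ) (k : ℕ) :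
    geomConv γ g (k + 1) = γ * geomConv γ g k + g k := by
  rw [geomConv, geomConv, sum_range_succ, Nat.add_sub_cancel, Nat.sub_self, pow_zero, one_mul,
    mul_sum]
  congr 1
  refine sum_congr rfl fun s hs => ?_
  rw [← mul_assoc, ← pow_succ']
  congr 2
  have := mem_range.1 hs
  omega

theorem geomConv_nonneg {γ : ℝ} {g : ℕ → ℝ} (hγ : 0 ≤ γ) (hg : ∀ s, 0 ≤ g s) (k : ℕ) :
    0 ≤ geomConv γ g k :=
  sum_nonneg fun s _ => mul_nonneg (pow_nonneg hγ _) (hg s)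

theorem tendsto_geomConv_zero {γ a : ℝ} {g β : ℕ → ℝ} (hg : ∀ s, 0 ≤ g s) (hγ : 0 ≤ γ)
    (ha : 0 ≤ a) (hγa : γ + a < 1) (hrec : ∀ k, g (k + 1) ≤ a * geomConv γ g k + β k)
    (hβ : Tendsto β atTop (𝓝 0)) : Tendsto (geomConv γ g) atTop (𝓝 0) :=
  tendsto_zero_of_le_two_step (geomConv_nonneg hγ hg) hγ ha hγa
    (fun k => by rw [geomConv_succ _ _ (k + 1)]; linarith [hrec k]) hβ

section AffineIteration

variable {R W : Type*} [Ring R] [AddCommGroup W] [Module R W]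

theorem eq_sum_pow_smul_of_succ {M : R} {V e : ℕ → W} (hV0 : V 0 = 0)
    (hV : ∀ k, V (k + 1) = M • V k + e k) (k : ℕ) :
    V k = ∑ s ∈ range k, M ^ (k - 1 - s) • e s := by
  induction k with
  | zero => simp [hV0]
  | succ k ih =>
    rw [hV, ih, smul_sum, sum_range_succ, Nat.add_sub_cancel, Nat.sub_self, pow_zero, one_smul]
    congr 1
    refine sum_congr rfl fun s hs => ?_
    rw [smul_smul, ← pow_succ']
    congr 2
    have := mem_range.1 hs
    omega

theorem mul_pow_eq_of_mul_eq {L M : R} (h : L * M = L) (m : ℕ) : L * M ^ m = L := by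
  induction m with
  | zero => rw [pow_zero, mul_one]
  | succ m ih => rw [pow_succ, ← mul_assoc, ih, h]

theorem sub_smul_eq_sum_of_succ {M L : R} (hLM : L * M = L) {V e : ℕ → W} (hV0 : V 0 = 0)
    (hV : ∀ k, V (k + 1) = M • V k + e k) (k : ℕ) :
    V k - L • V k = ∑ s ∈ range k, (M ^ (k - 1 - s) - L) • e s := by
  simp_rw [sub_smul, sum_sub_distrib, eq_sum_pow_smul_of_succ hV0 hV k, smul_sum, smul_smul,
    mul_pow_eq_of_mul_eq hLM]

end AffineIteration

theorem norm_sum_elim_zero_le {ι κ E : Type*} [Fintype ι] [SeminormedAddCommGroup E]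
    (v : ι → E) (b : ι ⊕ κ) : ‖Sum.elim v 0 b‖ ≤ ∑ j, ‖v j‖ := by
  rcases b with j | j
  · exact single_le_sum (fun j _ => norm_nonneg (v j)) (mem_univ j)
  · simpa using sum_nonneg fun j _ => norm_nonneg (v j)

theorem norm_matrix_smul_apply_le {ι 𝕜 E : Type*} [Fintype ι] [DecidableEq ι] [NormedField 𝕜]
    [SeminormedAddCommGroup E] [NormedSpace 𝕜 E] (N : Matrix ι ι 𝕜) {v : ι → E} {C : ℝ}
    (hv : ∀ b, ‖v b‖ ≤ C) (a : ι) :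
    ‖(N • v) a‖ ≤ (∑ b, ‖N a b‖) * C :=
  calc ‖(N • v) a‖ ≤ ∑ b, ‖N a b • v b‖ := norm_sum_le _ _
    _ ≤ ∑ b, ‖N a b‖ * C := sum_le_sum fun b _ => by
      rw [norm_smul]; exact mul_le_mul_of_nonneg_left (hv b) (norm_nonneg _)
    _ = (∑ b, ‖N a b‖) * C := (sum_mul ..).symm

section Deviation

variable {ι E : Type*} [Fintype ι] [DecidableEq ι] [SeminormedAddCommGroup E] [NormedSpace ℝ E]
  {M L : Matrix ι ι ℝ} {V e : ℕ → ι → E} {g : ℕ → ℝ} {Γ γ : ℝ}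

theorem norm_sub_smul_apply_le (hLM : L * M = L) (hV0 : V 0 = 0)
    (hV : ∀ k, V (k + 1) = M • V k + e k) (hML : ∀ m a, ∑ b, |(M ^ m - L) a b| ≤ Γ * γ ^ m)
    (hg : ∀ s, 0 ≤ g s) (he : ∀ s b, ‖e s b‖ ≤ g s) (k : ℕ) (a : ι) :
    ‖(V k - L • V k) a‖ ≤ Γ * geomConv γ g k := by
  rw [sub_smul_eq_sum_of_succ hLM hV0 hV k, Finset.sum_apply, geomConv, mul_sum]
  refine (norm_sum_le _ _).trans (sum_le_sum fun s _ => ?_)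
  rw [← mul_assoc]
  exact (norm_matrix_smul_apply_le _ (he s) a).trans
    (mul_le_mul_of_nonneg_right (by simpa using hML _ a) (hg s))

theorem norm_succ_apply_le_of_row_eq_zero {a : ι} (hLa : ∀ b, L a b = 0) (hea : ∀ s, e s a = 0)
    (hLM : L * M = L) (hV0 : V 0 = 0)
    (hV : ∀ k, V (k + 1) = M • V k + e k) (hML : ∀ m a, ∑ b, |(M ^ m - L) a b| ≤ Γ * γ ^ m)
    (hg : ∀ s, 0 ≤ g s) (he : ∀ s b, ‖e s b‖ ≤ g s) (k : ℕ) :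
    ‖V (k + 1) a‖ ≤ Γ * γ * geomConv γ g k := by
  have hVa : V (k + 1) a = (V (k + 1) - L • V (k + 1)) a := by simp [hLa]
  rw [hVa, sub_smul_eq_sum_of_succ hLM hV0 hV, sum_range_succ, Pi.add_apply, Finset.sum_apply]
  have hlast : ((M ^ (k + 1 - 1 - k) - L) • e k) a = 0 := by
    rw [Nat.add_sub_cancel, Nat.sub_self, pow_zero, sub_smul, one_smul]
    simp [hLa, hea]
  rw [hlast, add_zero, geomConv, mul_sum]
  refine (norm_sum_le _ _).trans (sum_le_sum fun s hs => ?_)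
  have hexp : k + 1 - 1 - s = k - 1 - s + 1 := by have := mem_range.1 hs; omega
  rw [hexp, ← mul_assoc, mul_assoc Γ, ← pow_succ']
  exact (norm_matrix_smul_apply_le _ (he s) a).trans
    (mul_le_mul_of_nonneg_right (by simpa using hML _ a) (hg s))

end Deviation

theorem norm_proj_sub_le {E : Type*} [SeminormedAddCommGroup E] [NormedSpace ℝ E] {X : Set E}
    {P : E → E} (hP : ∀ v w, w ∈ X → ‖P v - v‖ ≤ ‖w - v‖) {w : E} (hw : w ∈ X) (y d : E)
    {ε α B : ℝ} (hε : 0 ≤ ε) (hd : ‖d‖ ≤ B) :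
    ‖P (w + ε • y - α • d) - w - ε • y‖ ≤ ε * ‖y‖ + 2 * (|α| * B) := by
  set u := w + ε • y - α • d
  have hαd : ‖α • d‖ ≤ |α| * B := by
    rw [norm_smul, Real.norm_eq_abs]; exact mul_le_mul_of_nonneg_left hd (abs_nonneg α)
  calc ‖P u - w - ε • y‖ = ‖(P u - u) - α • d‖ := by simp only [u]; abel_nf
    _ ≤ ‖w - u‖ + ‖α • d‖ := (norm_sub_le _ _).trans (by gcongr; exact hP u w hw)
    _ = ‖α • d - ε • y‖ + ‖α • d‖ := by simp only [u]; abel_nf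
    _ ≤ ε * ‖y‖ + 2 * (|α| * B) := by
      have hεy : ‖ε • y‖ = ε * ‖y‖ := by rw [norm_smul, Real.norm_of_nonneg hε]
      linarith [norm_sub_le (α • d) (ε • y)]

section Augmented

variable {ι R E : Type*} [Fintype ι] [DecidableEq ι] [CommRing R] [AddCommGroup E] [Module R E]

def augmentedMatrix (A Bh : Matrix ι ι R) (ε : R) : Matrix (ι ⊕ ι) (ι ⊕ ι) R :=
  Matrix.fromBlocks A (ε • 1) (1 - A) (Bh - ε • 1)

def augmentedLimit (ι : Type*) (c : R) : Matrix (ι ⊕ ι) (ι ⊕ ι) R :=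
  Matrix.fromBlocks (Matrix.of fun _ _ => c) (Matrix.of fun _ _ => c) 0 0

theorem augmentedLimit_mul_augmentedMatrix {A Bh : Matrix ι ι R} (hBcol : ∀ j, ∑ i, Bh i j = 1)
    (c ε : R) : augmentedLimit ι c * augmentedMatrix A Bh ε = augmentedLimit ι c := by
  have hcol : (Matrix.of fun _ _ => c : Matrix ι ι R) * Bh = Matrix.of fun _ _ => c := by
    ext i j
    simp [Matrix.mul_apply, ← mul_sum, hBcol]
  simp only [augmentedLimit, augmentedMatrix, Matrix.fromBlocks_multiply, Matrix.mul_sub,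
    Matrix.mul_one, add_sub_cancel, hcol, Matrix.zero_mul]

theorem augmentedLimit_smul_inl (c : R) (x y : ι → E) (i : ι) :
    (augmentedLimit ι c • Sum.elim x y) (Sum.inl i) = c • (∑ j, x j + ∑ j, y j) := by
  simp [augmentedLimit, Fintype.sum_sum_type, smul_add, smul_sum]

theorem augmentedMatrix_smul_add {A Bh : Matrix ι ι R} {ε : R} {x y x' y' gv : ι → E}
    (hgv : ∀ i, gv i = x' i - ∑ j, A i j • x j - ε • y i)
    (hy' : ∀ i, y' i = x i - ∑ j, A i j • x j + (∑ j, Bh i j • y j) - ε • y i) :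
    Sum.elim x' y' = augmentedMatrix A Bh ε • Sum.elim x y + Sum.elim gv 0 := by
  ext (i | i)
  · simp [augmentedMatrix, Fintype.sum_sum_type, Matrix.one_apply, ite_smul, hgv]
  · simp [augmentedMatrix, Fintype.sum_sum_type, Matrix.one_apply, sub_smul, ite_smul, hy',
      sum_sub_distrib]
    abel

end Augmented

theorem ddps_consensus_general
    {n p : ℕ}
    (f : Fin n → EuclideanSpace ℝ (Fin p) → ℝ)
    (B : ℝ)
    (hsubB : ∀ (i : Fin n) (u s : EuclideanSpace ℝ (Fin p)),
      (∀ v, f i u + ⟪s, v - u⟫ ≤ f i v) → ‖s‖ ≤ B)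
    (X : Set (EuclideanSpace ℝ (Fin p)))
    (hXcv : Convex ℝ X)
    (hX0 : (0 : EuclideanSpace ℝ (Fin p)) ∈ X)
    (P : EuclideanSpace ℝ (Fin p) → EuclideanSpace ℝ (Fin p))
    (hPmem : ∀ v, P v ∈ X)
    (hPproj : ∀ v w, w ∈ X → ‖P v - v‖ ≤ ‖w - v‖)
    (A Bh : Matrix (Fin n) (Fin n) ℝ)
    (hAnn : ∀ i j, 0 ≤ A i j) (hArow : ∀ i, ∑ j, A i j = 1)
    (hBcol : ∀ j, ∑ i, Bh i j = 1)
    (ε : ℝ) (hε : 0 < ε)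
    (α : ℕ → ℝ)
    (x y d : ℕ → Fin n → EuclideanSpace ℝ (Fin p))
    (hx0 : ∀ i, x 0 i = 0) (hy0 : ∀ i, y 0 i = 0)
    (hd : ∀ k i v, f i (x k i) + ⟪d k i, v - x k i⟫ ≤ f i v)
    (hxupd : ∀ k i, x (k + 1) i = P (∑ j, A i j • x k j + ε • y k i - α k • d k i))
    (hyupd : ∀ k i, y (k + 1) i =
      x k i - ∑ j, A i j • x k j + (∑ j, Bh i j • y k j) - ε • y k i)
    (gv : ℕ → Fin n → EuclideanSpace ℝ (Fin p))
    (hgv : ∀ k i, gv k i = x (k + 1) i - ∑ j, A i j • x k j - ε • y k i)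
    (g : ℕ → ℝ) (hg : ∀ k, g k = ∑ i, ‖gv k i‖)
    (zbar : ℕ → EuclideanSpace ℝ (Fin p))
    (hzbar : ∀ k, zbar k = (n : ℝ)⁻¹ • (∑ i, x k i + ∑ i, y k i))
    (Γ γ : ℝ) (hΓ : 0 < Γ) (hγ0 : 0 < γ) (hγ1 : γ < 1)
    (hM : ∀ (k : ℕ) (i : Fin n ⊕ Fin n),
      ∑ j, |((Matrix.fromBlocks A (ε • (1 : Matrix (Fin n) (Fin n) ℝ))
          ((1 : Matrix (Fin n) (Fin n) ℝ) - A) (Bh - ε • (1 : Matrix (Fin n) (Fin n) ℝ))) ^ k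
        - Matrix.fromBlocks (Matrix.of fun _ _ => (n : ℝ)⁻¹)
            (Matrix.of fun _ _ => (n : ℝ)⁻¹) 0 0 :
          Matrix (Fin n ⊕ Fin n) (Fin n ⊕ Fin n) ℝ) i j| ≤ Γ * γ ^ k)
    (hεsmall : ε < (1 - γ) / (2 * n * Γ * γ))
    (hα2 : Summable fun k => (α k) ^ 2)
    :
    ∀ i : Fin n, Tendsto (fun k => ‖x k i - zbar k‖) atTop (nhds 0) := by
  intro i
  set M := augmentedMatrix A Bh ε
  set L := augmentedLimit (Fin n) (n : ℝ)⁻¹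
  set V : ℕ → Fin n ⊕ Fin n → EuclideanSpace ℝ (Fin p) := fun k => Sum.elim (x k) (y k)
  set e : ℕ → Fin n ⊕ Fin n → EuclideanSpace ℝ (Fin p) := fun k => Sum.elim (gv k) 0
  have hLM : L * M = L := augmentedLimit_mul_augmentedMatrix hBcol _ _
  have hV0 : V 0 = 0 := by ext (j | j) : 1 <;> simp [V, hx0, hy0]
  have hV : ∀ k, V (k + 1) = M • V k + e k := fun k => augmentedMatrix_smul_add (hgv k) (hyupd k)
  have hg0 : ∀ s, 0 ≤ g s := fun s => hg s ▸ sum_nonneg fun j _ => norm_nonneg _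
  have he : ∀ s b, ‖e s b‖ ≤ g s := fun s b => hg s ▸ norm_sum_elim_zero_le (gv s) b
  have hxX : ∀ k j, x k j ∈ X := by
    rintro (_ | k) j
    · rw [hx0]; exact hX0
    · rw [hxupd]; exact hPmem _
  have hgv_le : ∀ k j, ‖gv k j‖ ≤ ε * ‖y k j‖ + 2 * (|α k| * B) := fun k j => by
    rw [hgv, hxupd]
    exact norm_proj_sub_le hPproj (hXcv.sum_mem (fun l _ => hAnn j l) (hArow j)
      fun l _ => hxX k l) _ _ hε.le (hsubB j _ _ (hd k j))
  have hy : ∀ k j, ‖y (k + 1) j‖ ≤ Γ * γ * geomConv γ g k := fun k j =>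
    norm_succ_apply_le_of_row_eq_zero (a := Sum.inr j) (fun b => by cases b <;> rfl) (fun _ => rfl)
      hLM hV0 hV hM hg0 he k
  have hgrec : ∀ k,
      g (k + 1) ≤ ε * n * Γ * γ * geomConv γ g k + n * (2 * (|α (k + 1)| * B)) := by
    intro k
    have := sum_le_card_nsmul univ _ _ fun j _ => (hgv_le (k + 1) j).trans
      (add_le_add_left (mul_le_mul_of_nonneg_left (hy k j) hε.le) _)
    rw [card_univ, Fintype.card_fin, nsmul_eq_mul, ← hg] at this
    linarith
  have hα : Tendsto (fun k => |α k|) atTop (𝓝 0) := by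
    simpa [Real.sqrt_sq_eq_abs] using hα2.tendsto_atTop_zero.sqrt
  have hβ : Tendsto (fun k => n * (2 * (|α (k + 1)| * B))) atTop (𝓝 0) := by
    simpa using ((((tendsto_add_atTop_iff_nat 1).2 hα).mul_const B).const_mul 2).const_mul (n : ℝ)
  have hgain : γ + ε * n * Γ * γ < 1 := by
    have hn0 : (0 : ℝ) < n := Nat.cast_pos.2 i.pos
    have := (lt_div_iff₀ (by positivity)).1 hεsmall
    nlinarith
  have hS := tendsto_geomConv_zero hg0 hγ0.le (by positivity) hgain hgrec hβ
  refine squeeze_zero (fun _ => norm_nonneg _) (fun k => ?_) (by simpa using hS.const_mul Γ)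
  have := norm_sub_smul_apply_le hLM hV0 hV hM hg0 he k (Sum.inl i)
  rwa [Pi.sub_apply, augmentedLimit_smul_inl, ← hzbar] at this

theorem ddps_consensus
    {n p : ℕ} (hn : 1 ≤ n) (hp : 1 ≤ p)
    (f : Fin n → EuclideanSpace ℝ (Fin p) → ℝ)
    (hconv : ∀ i, ConvexOn ℝ Set.univ (f i))
    (B : ℝ) (hB : 0 < B)
    (hsubB : ∀ (i : Fin n) (u s : EuclideanSpace ℝ (Fin p)),
      (∀ v, f i u + ⟪s, v - u⟫ ≤ f i v) → ‖s‖ ≤ B)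
    (X : Set (EuclideanSpace ℝ (Fin p)))
    (hXne : X.Nonempty) (hXcl : IsClosed X) (hXcv : Convex ℝ X)
    (hX0 : (0 : EuclideanSpace ℝ (Fin p)) ∈ X)
    (P : EuclideanSpace ℝ (Fin p) → EuclideanSpace ℝ (Fin p))
    (hPmem : ∀ v, P v ∈ X)
    (hPproj : ∀ v w, w ∈ X → ‖P v - v‖ ≤ ‖w - v‖)
    (A Bh : Matrix (Fin n) (Fin n) ℝ)
    (hAnn : ∀ i j, 0 ≤ A i j) (hArow : ∀ i, ∑ j, A i j = 1)
    (hBnn : ∀ i j, 0 ≤ Bh i j) (hBcol : ∀ j, ∑ i, Bh i j = 1)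
    (ε : ℝ) (hε : 0 < ε)
    (α : ℕ → ℝ) (hαnn : ∀ k, 0 ≤ α k) (hαdec : ∀ k, α (k + 1) ≤ α k)
    (x y d : ℕ → Fin n → EuclideanSpace ℝ (Fin p))
    (hx0 : ∀ i, x 0 i = 0) (hy0 : ∀ i, y 0 i = 0)
    (hd : ∀ k i v, f i (x k i) + ⟪d k i, v - x k i⟫ ≤ f i v)
    (hxupd : ∀ k i, x (k + 1) i = P (∑ j, A i j • x k j + ε • y k i - α k • d k i))
    (hyupd : ∀ k i, y (k + 1) i =
      x k i - ∑ j, A i j • x k j + (∑ j, Bh i j • y k j) - ε • y k i)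
    (gv : ℕ → Fin n → EuclideanSpace ℝ (Fin p))
    (hgv : ∀ k i, gv k i = x (k + 1) i - ∑ j, A i j • x k j - ε • y k i)
    (g : ℕ → ℝ) (hg : ∀ k, g k = ∑ i, ‖gv k i‖)
    (zbar : ℕ → EuclideanSpace ℝ (Fin p))
    (hzbar : ∀ k, zbar k = (n : ℝ)⁻¹ • (∑ i, x k i + ∑ i, y k i))
    (Γ γ : ℝ) (hΓ : 0 < Γ) (hγ0 : 0 < γ) (hγ1 : γ < 1)
    (hM : ∀ (k : ℕ) (i : Fin n ⊕ Fin n),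
      ∑ j, |((Matrix.fromBlocks A (ε • (1 : Matrix (Fin n) (Fin n) ℝ))
          ((1 : Matrix (Fin n) (Fin n) ℝ) - A) (Bh - ε • (1 : Matrix (Fin n) (Fin n) ℝ))) ^ k
        - Matrix.fromBlocks (Matrix.of fun _ _ => (n : ℝ)⁻¹)
            (Matrix.of fun _ _ => (n : ℝ)⁻¹) 0 0 :
          Matrix (Fin n ⊕ Fin n) (Fin n ⊕ Fin n) ℝ) i j| ≤ Γ * γ ^ k)
    (hεsmall : ε < (1 - γ) / (2 * n * Γ * γ))
    (hα2 : Summable fun k => (α k) ^ 2)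
    :
    ∀ i : Fin n, Tendsto (fun k => ‖x k i - zbar k‖) atTop (nhds 0) :=
  ddps_consensus_general f B hsubB X hXcv hX0 P hPmem hPproj A Bh hAnn hArow hBcol ε hε α x y d hx0
    hy0 hd hxupd hyupd gv hgv g hg zbar hzbar Γ γ hΓ hγ0 hγ1 hM hεsmall hα2
end

section
/- For every x* ∈ X* and every k ≥ 0, the D-DPS iterates satisfy (2α_k/n)(f(z̄^k) − f*) ≤ ‖z̄^k − x*‖² − ‖z̄^{k+1} − x*‖² + (1/n²)‖Σ_{i=1}^n g_i^k‖² + (4Bα_k/n) Σ_{i=1}^n ‖z̄^k − x_i^k‖ + (2/n) Σ_{i=1}^n ⟨z̄^k − x*, g_i^k + α_k d_i^k⟩. -/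
open Finset
open scoped RealInnerProductSpace

/-!
The `A`-mixing terms cancel between the two updates and `B̂` is column stochastic, so
`∑ xᵢ + ∑ yᵢ` changes exactly by `∑ gᵢᵏ`, i.e. `z̄ᵏ⁺¹ = z̄ᵏ + (1/n) ∑ gᵢᵏ`. Expanding `‖z̄ᵏ⁺¹ - x*‖²`
produces `(2/n)⟪z̄ᵏ - x*, ∑ gᵢᵏ⟫`, and the function gap is bounded agent by agent:
`fᵢ(z̄) - fᵢ(x*) ≤ B‖z̄ - xᵢ‖ + ⟪dᵢ, xᵢ - z̄⟫ + ⟪dᵢ, z̄ - x*⟫` by `B`-Lipschitz continuity and the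
subgradient inequality at `xᵢ`. Lipschitz continuity follows from the bound on all subgradients,
which exist by Hahn–Banach applied to the strict epigraph.
-/

section Subgradient

variable {E : Type*} [NormedAddCommGroup E]

theorem ConvexOn.exists_continuousLinearMap_add_le [NormedSpace ℝ E] {f : E → ℝ}
    (hf : ConvexOn ℝ Set.univ f) (hcont : Continuous f) (u : E) :
    ∃ ℓ : E →L[ℝ] ℝ, ∀ v, f u + ℓ (v - u) ≤ f v := by
  have hconv : Convex ℝ {q : E × ℝ | f q.1 < q.2} := by
    simpa using hf.convex_strict_epigraph
  have hopen : IsOpen {q : E × ℝ | f q.1 < q.2} :=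
    isOpen_lt (hcont.comp continuous_fst) continuous_snd
  -- A functional separating `(u, f u)` from the open strict epigraph increases along `(0, 1)`,
  -- so it is the graph of a supporting affine function.
  obtain ⟨φ, hφ⟩ := geometric_hahn_banach_point_open (x := (u, f u)) hconv hopen (lt_irrefl (f u))
  set r := φ (0, 1)
  have hφ_apply : ∀ v t, φ (v, t) = φ (v, 0) + t * r := fun v t => by
    rw [← smul_eq_mul, ← map_smul, ← map_add, Prod.smul_mk, smul_zero, smul_eq_mul, mul_one,
      Prod.mk_add_mk, add_zero, zero_add]
  have hr : 0 < r := by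
    have := hφ (u, f u + 1) (lt_add_one (f u))
    rw [hφ_apply u (f u), hφ_apply u (f u + 1)] at this
    linarith
  refine ⟨-r⁻¹ • φ.comp (ContinuousLinearMap.inl ℝ E ℝ), fun v => ?_⟩
  have hsupp : φ (u, 0) + f u * r ≤ φ (v, 0) + f v * r := by
    refine le_of_forall_pos_lt_add fun δ hδ => ?_
    have := hφ (v, f v + δ / r) (by simp [hδ, hr])
    rw [hφ_apply u, hφ_apply v, add_mul, div_mul_cancel₀ _ hr.ne'] at this
    linarith
  have hℓ : (-r⁻¹ • φ.comp (ContinuousLinearMap.inl ℝ E ℝ)) (v - u)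
      = (φ (u, 0) - φ (v, 0)) / r := by
    simp only [map_sub, ContinuousLinearMap.smul_apply, ContinuousLinearMap.comp_apply,
      ContinuousLinearMap.inl_apply, smul_eq_mul, div_eq_inv_mul]
    ring
  rw [hℓ, ← le_sub_iff_add_le', div_le_iff₀ hr]
  linarith

variable [InnerProductSpace ℝ E]

def IsSubgradient (f : E → ℝ) (u s : E) : Prop := ∀ v, f u + ⟪s, v - u⟫ ≤ f v

theorem IsSubgradient.sub_le_inner {f : E → ℝ} {u s : E} (h : IsSubgradient f u s) (v : E) :
    f u - f v ≤ ⟪s, u - v⟫ := by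
  have := h v
  rw [← neg_sub u v, inner_neg_right] at this
  linarith

theorem ConvexOn.exists_isSubgradient [FiniteDimensional ℝ E] {f : E → ℝ}
    (hf : ConvexOn ℝ Set.univ f) (u : E) : ∃ s, IsSubgradient f u s := by
  obtain ⟨ℓ, hℓ⟩ := hf.exists_continuousLinearMap_add_le
    (continuousOn_univ.mp (hf.continuousOn isOpen_univ)) u
  refine ⟨(InnerProductSpace.toDual ℝ E).symm ℓ, fun v => ?_⟩
  simpa [InnerProductSpace.toDual_symm_apply] using hℓ v

theorem ConvexOn.sub_le_mul_norm_sub_of_isSubgradient_norm_le [FiniteDimensional ℝ E]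
    {f : E → ℝ} (hf : ConvexOn ℝ Set.univ f) {B : ℝ}
    (hB : ∀ u s, IsSubgradient f u s → ‖s‖ ≤ B) (a b : E) :
    f a - f b ≤ B * ‖a - b‖ := by
  obtain ⟨s, hs⟩ := hf.exists_isSubgradient a
  calc f a - f b ≤ ⟪s, a - b⟫ := hs.sub_le_inner b
    _ ≤ ‖s‖ * ‖a - b‖ := real_inner_le_norm _ _
    _ ≤ B * ‖a - b‖ := by gcongr; exact hB a s hs

theorem IsSubgradient.sub_le_of_norm_le {f : E → ℝ} {x d : E} (hd : IsSubgradient f x d)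
    {B : ℝ} (hdB : ‖d‖ ≤ B) (hf : ∀ a b, f a - f b ≤ B * ‖a - b‖) (z w : E) :
    f z - f w ≤ 2 * B * ‖z - x‖ + ⟪z - w, d⟫ := by
  have hsplit : ⟪d, x - w⟫ = ⟪d, x - z⟫ + ⟪z - w, d⟫ := by
    rw [real_inner_comm d (z - w), ← inner_add_right, sub_add_sub_cancel]
  have hxz : ⟪d, x - z⟫ ≤ B * ‖z - x‖ := by
    calc ⟪d, x - z⟫ ≤ ‖d‖ * ‖x - z‖ := real_inner_le_norm _ _
      _ ≤ B * ‖z - x‖ := by rw [norm_sub_rev]; gcongr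
  linarith [hf z x, hd.sub_le_inner w]

end Subgradient

theorem sum_sum_smul_eq_sum_of_sum_col_eq_one {ι M : Type*} [Fintype ι] [AddCommMonoid M]
    [Module ℝ M] {B : Matrix ι ι ℝ} (hB : ∀ j, ∑ i, B i j = 1) (v : ι → M) :
    ∑ i, ∑ j, B i j • v j = ∑ j, v j := by
  rw [sum_comm]
  simp only [← sum_smul, hB, one_smul]

theorem sum_add_sum_eq_of_ddps_step {ι M : Type*} [Fintype ι] [AddCommGroup M] [Module ℝ M]
    (A B : Matrix ι ι ℝ) (hB : ∀ j, ∑ i, B i j = 1) (ε : ℝ) {x y x' y' g : ι → M}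
    (hy' : ∀ i, y' i = x i - ∑ j, A i j • x j + ∑ j, B i j • y j - ε • y i)
    (hg : ∀ i, g i = x' i - ∑ j, A i j • x j - ε • y i) :
    ∑ i, x' i + ∑ i, y' i = ∑ i, x i + ∑ i, y i + ∑ i, g i := by
  simp only [hy', hg, sum_add_distrib, sum_sub_distrib, sum_sum_smul_eq_sum_of_sum_col_eq_one hB]
  abel

theorem ddps_basic_optimality_inequality_general
    {n p : ℕ}
    (f : Fin n → EuclideanSpace ℝ (Fin p) → ℝ)
    (hconv : ∀ i, ConvexOn ℝ Set.univ (f i))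
    (B : ℝ)
    (hsubB : ∀ (i : Fin n) (u s : EuclideanSpace ℝ (Fin p)),
      (∀ v, f i u + ⟪s, v - u⟫ ≤ f i v) → ‖s‖ ≤ B)
    (X : Set (EuclideanSpace ℝ (Fin p)))
    (A Bh : Matrix (Fin n) (Fin n) ℝ)
    (hBcol : ∀ j, ∑ i, Bh i j = 1)
    (ε : ℝ)
    (α : ℕ → ℝ) (hαnn : ∀ k, 0 ≤ α k)
    (x y d : ℕ → Fin n → EuclideanSpace ℝ (Fin p))
    (hd : ∀ k i v, f i (x k i) + ⟪d k i, v - x k i⟫ ≤ f i v)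
    (hyupd : ∀ k i, y (k + 1) i =
      x k i - ∑ j, A i j • x k j + (∑ j, Bh i j • y k j) - ε • y k i)
    (gv : ℕ → Fin n → EuclideanSpace ℝ (Fin p))
    (hgv : ∀ k i, gv k i = x (k + 1) i - ∑ j, A i j • x k j - ε • y k i)
    (zbar : ℕ → EuclideanSpace ℝ (Fin p))
    (hzbar : ∀ k, zbar k = (n : ℝ)⁻¹ • (∑ i, x k i + ∑ i, y k i))
    (fstar : ℝ)
    :
    ∀ xs ∈ X, (∑ i, f i xs) = fstar → ∀ k : ℕ,
      (2 * α k / n) * ((∑ i, f i (zbar k)) - fstar) ≤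
        ‖zbar k - xs‖ ^ 2 - ‖zbar (k + 1) - xs‖ ^ 2 +
          (1 / (n : ℝ) ^ 2) * ‖∑ i, gv k i‖ ^ 2 +
          (4 * B * α k / n) * ∑ i, ‖zbar k - x k i‖ +
          (2 / n) * ∑ i, ⟪zbar k - xs, gv k i + α k • d k i⟫ := by
  intro xs _ hfxs k
  have hstep : zbar (k + 1) = zbar k + (n : ℝ)⁻¹ • ∑ i, gv k i := by
    rw [hzbar, hzbar, sum_add_sum_eq_of_ddps_step A Bh hBcol ε (hyupd k) (hgv k), smul_add]
  have hdist : ‖zbar (k + 1) - xs‖ ^ 2 = ‖zbar k - xs‖ ^ 2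
      + 2 * ((n : ℝ)⁻¹ * ∑ i, ⟪zbar k - xs, gv k i⟫) + ((n : ℝ)⁻¹) ^ 2 * ‖∑ i, gv k i‖ ^ 2 := by
    rw [hstep, add_sub_right_comm, norm_add_sq_real, real_inner_smul_right, norm_smul, mul_pow,
      Real.norm_eq_abs, sq_abs, inner_sum]
  have hagent (i : Fin n) :
      f i (zbar k) - f i xs ≤ 2 * B * ‖zbar k - x k i‖ + ⟪zbar k - xs, d k i⟫ :=
    IsSubgradient.sub_le_of_norm_le (hd k i) (hsubB i _ _ (hd k i))
      ((hconv i).sub_le_mul_norm_sub_of_isSubgradient_norm_le (hsubB i)) _ _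
  have hsum := sum_le_sum fun i (_ : i ∈ univ) => hagent i
  rw [sum_sub_distrib, sum_add_distrib, ← mul_sum] at hsum
  simp only [inner_add_right, real_inner_smul_right, sum_add_distrib, ← mul_sum]
  rw [hdist, ← hfxs]
  have hcoef : 0 ≤ 2 * α k / n := div_nonneg (mul_nonneg zero_le_two (hαnn k)) n.cast_nonneg
  linear_combination (2 * α k / n) * hsum

theorem ddps_basic_optimality_inequality
    {n p : ℕ} (hn : 1 ≤ n) (hp : 1 ≤ p)
    (f : Fin n → EuclideanSpace ℝ (Fin p) → ℝ)
    (hconv : ∀ i, ConvexOn ℝ Set.univ (f i))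
    (B : ℝ) (hB : 0 < B)
    (hsubB : ∀ (i : Fin n) (u s : EuclideanSpace ℝ (Fin p)),
      (∀ v, f i u + ⟪s, v - u⟫ ≤ f i v) → ‖s‖ ≤ B)
    (X : Set (EuclideanSpace ℝ (Fin p)))
    (hXne : X.Nonempty) (hXcl : IsClosed X) (hXcv : Convex ℝ X)
    (hX0 : (0 : EuclideanSpace ℝ (Fin p)) ∈ X)
    (P : EuclideanSpace ℝ (Fin p) → EuclideanSpace ℝ (Fin p))
    (hPmem : ∀ v, P v ∈ X)
    (hPproj : ∀ v w, w ∈ X → ‖P v - v‖ ≤ ‖w - v‖)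
    (A Bh : Matrix (Fin n) (Fin n) ℝ)
    (hAnn : ∀ i j, 0 ≤ A i j) (hArow : ∀ i, ∑ j, A i j = 1)
    (hBnn : ∀ i j, 0 ≤ Bh i j) (hBcol : ∀ j, ∑ i, Bh i j = 1)
    (ε : ℝ) (hε : 0 < ε)
    (α : ℕ → ℝ) (hαnn : ∀ k, 0 ≤ α k) (hαdec : ∀ k, α (k + 1) ≤ α k)
    (x y d : ℕ → Fin n → EuclideanSpace ℝ (Fin p))
    (hx0 : ∀ i, x 0 i = 0) (hy0 : ∀ i, y 0 i = 0)
    (hd : ∀ k i v, f i (x k i) + ⟪d k i, v - x k i⟫ ≤ f i v)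
    (hxupd : ∀ k i, x (k + 1) i = P (∑ j, A i j • x k j + ε • y k i - α k • d k i))
    (hyupd : ∀ k i, y (k + 1) i =
      x k i - ∑ j, A i j • x k j + (∑ j, Bh i j • y k j) - ε • y k i)
    (gv : ℕ → Fin n → EuclideanSpace ℝ (Fin p))
    (hgv : ∀ k i, gv k i = x (k + 1) i - ∑ j, A i j • x k j - ε • y k i)
    (g : ℕ → ℝ) (hg : ∀ k, g k = ∑ i, ‖gv k i‖)
    (zbar : ℕ → EuclideanSpace ℝ (Fin p))
    (hzbar : ∀ k, zbar k = (n : ℝ)⁻¹ • (∑ i, x k i + ∑ i, y k i))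
    (Γ γ : ℝ) (hΓ : 0 < Γ) (hγ0 : 0 < γ) (hγ1 : γ < 1)
    (hM : ∀ (k : ℕ) (i : Fin n ⊕ Fin n),
      ∑ j, |((Matrix.fromBlocks A (ε • (1 : Matrix (Fin n) (Fin n) ℝ))
          ((1 : Matrix (Fin n) (Fin n) ℝ) - A) (Bh - ε • (1 : Matrix (Fin n) (Fin n) ℝ))) ^ k
        - Matrix.fromBlocks (Matrix.of fun _ _ => (n : ℝ)⁻¹)
            (Matrix.of fun _ _ => (n : ℝ)⁻¹) 0 0 :
          Matrix (Fin n ⊕ Fin n) (Fin n ⊕ Fin n) ℝ) i j| ≤ Γ * γ ^ k)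
    (fstar : ℝ) (hfstar : IsGLB ((fun v => ∑ i, f i v) '' X) fstar)
    (hXstar : ∃ xs ∈ X, ∑ i, f i xs = fstar)
    :
    ∀ xs ∈ X, (∑ i, f i xs) = fstar → ∀ k : ℕ,
      (2 * α k / n) * ((∑ i, f i (zbar k)) - fstar) ≤
        ‖zbar k - xs‖ ^ 2 - ‖zbar (k + 1) - xs‖ ^ 2 +
          (1 / (n : ℝ) ^ 2) * ‖∑ i, gv k i‖ ^ 2 +
          (4 * B * α k / n) * ∑ i, ‖zbar k - x k i‖ +
          (2 / n) * ∑ i, ⟪zbar k - xs, gv k i + α k • d k i⟫ :=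
  ddps_basic_optimality_inequality_general f hconv B hsubB X A Bh hBcol ε α hαnn x y d hd hyupd gv
    hgv zbar hzbar fstar
end
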